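/- arXiv:2207.11197 — 2 statements merged into one kernel-verified Lean document; each statement's English description precedes it below -/
import Mathlib

section
/- Let R = C[[x,y]], J = (P,Q) an ideal with M := R/J finite-dimensional over C, and f ∈ R with f² ∈ J. Set τ := dim_C R/(f,P,Q) and μ := dim_C M. Then τ ≤ μ ≤ 2τ. -/
/-!
Multiplication by `f̄` on `M = R/J` squares to zero, so its image lies in its kernel and
rank–nullity gives `2 · dim (f̄ M) ≤ μ`. Since `R/(f,P,Q) ≅ M / f̄ M`, we have
`τ = μ - dim (f̄ M)`, whence `τ ≤ μ ≤ 2τ`.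
-/

open Module

theorem finrank_le_two_mul_finrank_quotient_span_singleton {K A : Type*} [Field K] [CommRing A]
    [Algebra K A] [FiniteDimensional K A] {a : A} (ha : a ^ 2 = 0) :
    finrank K A ≤ 2 * finrank K (A ⧸ Ideal.span {a}) := by
  set σ := LinearMap.mulLeft K a
  have hrange_le_ker : LinearMap.range σ ≤ LinearMap.ker σ := by
    rintro _ ⟨b, rfl⟩
    simp [σ, ← mul_assoc, ← pow_two, ha]
  have hspan : (Ideal.span {a}).restrictScalars K = LinearMap.range σ := by
    ext x
    simp [Ideal.mem_span_singleton', σ, mul_comm]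
  have hquot :
      finrank K (A ⧸ Ideal.span {a}) = finrank K A - finrank K (LinearMap.range σ) := by
    rw [Submodule.finrank_quotient, ← hspan]
    rfl
  have hrank_nullity := LinearMap.finrank_range_add_finrank_ker σ
  have hrange_le := Submodule.finrank_mono hrange_le_ker
  omega

noncomputable def Ideal.quotientSpanInsertEquiv (K : Type*) {R : Type*} [CommRing K] [CommRing R]
    [Algebra K R] (f : R) (s : Set R) :
    (R ⧸ Ideal.span (insert f s)) ≃ₐ[K]
      (R ⧸ Ideal.span s) ⧸ Ideal.span {Ideal.Quotient.mk (Ideal.span s) f} :=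
  (Ideal.quotientEquivAlgOfEq K (by rw [Ideal.span_insert, sup_comm])).trans <|
    (DoubleQuot.quotQuotEquivQuotSupₐ K (Ideal.span s) (Ideal.span {f})).symm.trans <|
      Ideal.quotientEquivAlgOfEq K (by rw [Ideal.map_span, Set.image_singleton]; rfl)

/-- algebraic core of Proposition 4.1: for `R = ℂ[[x,y]]`, `J = (P,Q)` with
`M = R/J` finite dimensional over `ℂ`, and `f ∈ R` with `f² ∈ J`, setting
`μ = dim_ℂ R/J` and `τ = dim_ℂ R/(f,P,Q)`, one has `τ ≤ μ ≤ 2τ`. -/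
theorem stmt_5 (P Q f : MvPowerSeries (Fin 2) ℂ)
    (hfin : FiniteDimensional ℂ (MvPowerSeries (Fin 2) ℂ ⧸ (Ideal.span {P, Q})))
    (hBS : f ^ 2 ∈ Ideal.span {P, Q}) :
    finrank ℂ (MvPowerSeries (Fin 2) ℂ ⧸ (Ideal.span {f, P, Q}))
      ≤ finrank ℂ (MvPowerSeries (Fin 2) ℂ ⧸ (Ideal.span {P, Q})) ∧
    finrank ℂ (MvPowerSeries (Fin 2) ℂ ⧸ (Ideal.span {P, Q}))
      ≤ 2 * finrank ℂ (MvPowerSeries (Fin 2) ℂ ⧸ (Ideal.span {f, P, Q})) := by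
  rw [(Ideal.quotientSpanInsertEquiv ℂ f {P, Q}).toLinearEquiv.finrank_eq]
  have hsq : Ideal.Quotient.mk (Ideal.span {P, Q}) f ^ 2 = 0 := by
    rw [← map_pow, Ideal.Quotient.eq_zero_iff_mem]
    exact hBS
  refine ⟨?_, finrank_le_two_mul_finrank_quotient_span_singleton hsq⟩
  rw [Submodule.finrank_quotient (R := ℂ)]
  exact Nat.sub_le _ _
end

section
/- Let R = C[[x,y]], J = (P,Q) with M := R/J finite-dimensional, f ∈ R with f² ∈ J. With σ : M → M multiplication by f̄, one has μ = 2τ if and only if ker σ = (f̄), where μ = dim_C M and τ = dim_C R/(f,P,Q). -/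
/-!
Write `M = R/J` and `a = f̄`. The image of multiplication by `a` is `(a)`, so rank–nullity gives
`dim ker σ = dim M/(a) = τ`, while `μ = τ + dim (a)`. Since `a² = 0`, `(a) ⊆ ker σ`, and `μ = 2τ`
says exactly that this inclusion is an equality of dimensions.
-/

open Module

section SquareZero

variable {K A : Type*} [Field K] [CommRing A] [Algebra K A]

theorem range_mulLeft_eq_span_singleton (a : A) :
    LinearMap.range (LinearMap.mulLeft K a) = (Ideal.span {a}).restrictScalars K := by
  ext x
  simp [Ideal.mem_span_singleton', mul_comm, eq_comm]

theorem span_singleton_le_ker_mulLeft {a : A} (ha : a ^ 2 = 0) :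
    (Ideal.span {a}).restrictScalars K ≤ LinearMap.ker (LinearMap.mulLeft K a) := by
  intro x hx
  obtain ⟨c, rfl⟩ := Ideal.mem_span_singleton.mp hx
  simp [← mul_assoc, ← sq, ha]

variable [FiniteDimensional K A]

theorem finrank_ker_mulLeft (a : A) :
    finrank K (LinearMap.ker (LinearMap.mulLeft K a)) = finrank K (A ⧸ Ideal.span {a}) := by
  have hrank := LinearMap.finrank_range_add_finrank_ker (LinearMap.mulLeft K a)
  have hquot := Submodule.finrank_quotient_add_finrank ((Ideal.span {a}).restrictScalars K)
  rw [range_mulLeft_eq_span_singleton] at hrank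
  rw [(Submodule.Quotient.restrictScalarsEquiv K (Ideal.span {a})).finrank_eq] at hquot
  omega

theorem finrank_eq_two_mul_finrank_quotient_iff {a : A} (ha : a ^ 2 = 0) :
    finrank K A = 2 * finrank K (A ⧸ Ideal.span {a}) ↔
      LinearMap.ker (LinearMap.mulLeft K a) = (Ideal.span {a}).restrictScalars K := by
  have hquot := Submodule.finrank_quotient_add_finrank ((Ideal.span {a}).restrictScalars K)
  rw [(Submodule.Quotient.restrictScalarsEquiv K (Ideal.span {a})).finrank_eq] at hquot
  have hker := finrank_ker_mulLeft (K := K) a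
  constructor
  · intro h
    exact (Submodule.eq_of_le_of_finrank_le (span_singleton_le_ker_mulLeft ha) (by omega)).symm
  · intro h
    rw [h] at hker
    omega

end SquareZero

theorem Ideal.finrank_quotient_span_insert (K : Type*) {R : Type*} [Field K] [CommRing R]
    [Algebra K R] (f : R) (s : Set R) :
    finrank K (R ⧸ Ideal.span (insert f s)) =
      finrank K ((R ⧸ Ideal.span s) ⧸ Ideal.span {Ideal.Quotient.mk (Ideal.span s) f}) := by
  have hsup : Ideal.span (insert f s) = Ideal.span s ⊔ Ideal.span {f} := by
    rw [Ideal.span_insert, sup_comm]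
  have hmap : (Ideal.span {f}).map (Ideal.Quotient.mkₐ K (Ideal.span s)) =
      Ideal.span {Ideal.Quotient.mk (Ideal.span s) f} := by
    rw [Ideal.map_span, Set.image_singleton]; rfl
  exact ((Ideal.quotientEquivAlgOfEq K hsup).trans
    ((DoubleQuot.quotQuotEquivQuotSupₐ K _ _).symm.trans
      (Ideal.quotientEquivAlgOfEq K hmap))).toLinearEquiv.finrank_eq

/-- with `R = ℂ[[x,y]]`, `J = (P,Q)`, `M = R/J` finite dimensional, `f² ∈ J`,
and `σ : M → M` multiplication by `f̄`, one has `μ = 2τ` iff `ker σ = (f̄)`. -/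
theorem stmt_7 (P Q f : MvPowerSeries (Fin 2) ℂ)
    (hfin : FiniteDimensional ℂ (MvPowerSeries (Fin 2) ℂ ⧸ (Ideal.span {P, Q})))
    (hBS : f ^ 2 ∈ Ideal.span {P, Q}) :
    finrank ℂ (MvPowerSeries (Fin 2) ℂ ⧸ (Ideal.span {P, Q}))
        = 2 * finrank ℂ (MvPowerSeries (Fin 2) ℂ ⧸ (Ideal.span {f, P, Q}))
      ↔ LinearMap.ker (LinearMap.mulLeft ℂ (Ideal.Quotient.mk (Ideal.span {P, Q}) f))
          = Submodule.restrictScalars ℂ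
              (Ideal.span {Ideal.Quotient.mk (Ideal.span {P, Q}) f}) := by
  have hsq : Ideal.Quotient.mk (Ideal.span {P, Q}) f ^ 2 = 0 := by
    rw [← map_pow, Ideal.Quotient.eq_zero_iff_mem]
    exact hBS
  rw [Ideal.finrank_quotient_span_insert ℂ f]
  exact finrank_eq_two_mul_finrank_quotient_iff (K := ℂ) hsq
end
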